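/- If the sample measures satisfy the fibered mixing hypothesis (II), then for all n ≥ 1, g ≥ 1 and every A ∈ F₀ⁿ(X): |μ(A ∩ σ^{−g−n}A) − μ(A)²| ≤ α(g) + |∫_Ω (μ_ω(A) − μ(A))·(μ_{θ^{n+g}ω}(A) − μ(A)) dℙ(ω)|. -/

import Mathlib

open MeasureTheory Filter ProbabilityTheory Set

noncomputable section

/-- The one-sided shift on `ℕ`-indexed sequences. -/
def shiftN {A : Type*} (x : ℕ → A) : ℕ → A := fun n => x (n + 1)

/-- The `k`-cylinder determined by the word `w`. -/
def cyl {A : Type*} (k : ℕ) (w : Fin k → A) : Set (ℕ → A) := {x | ∀ i : Fin k, x (i : ℕ) = w i}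

/-- Membership in the σ-algebra `F₀ⁿ(X)` generated by the `n`-cylinders:
the sets determined by the first `n` coordinates. -/
def cylAlg {A : Type*} (n : ℕ) (B : Set (ℕ → A)) : Prop :=
  ∃ s : Set (Fin n → A), B = {x | (fun i : Fin n => x (i : ℕ)) ∈ s}

/-- Length of the longest common substring of `x` and `y` within the first `n` symbols:
`M_n(x,y) = max{m : x_{i+k} = y_{j+k}, k = 1,…,m, for some 0 ≤ i,j ≤ n-m}`. -/
def Mstat {A : Type*} (x y : ℕ → A) (n : ℕ) : ℕ :=
  sSup {m | ∃ i j : ℕ, i + m ≤ n ∧ j + m ≤ n ∧ ∀ k, 1 ≤ k → k ≤ m → x (i + k) = y (j + k)}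

/-- Lower Rényi entropy `H̲₂(μ) = liminf_k (-1/k) log Σ_{C_k} μ(C_k)²`. -/
def H2low (N : ℕ) (μ : Measure (ℕ → Fin N)) : ℝ :=
  liminf (fun k : ℕ =>
    Real.log (∑ w : Fin k → Fin N, (μ (cyl k w)).toReal ^ 2) / (-(k : ℝ))) atTop

/-- Upper Rényi entropy `H̄₂(μ) = limsup_k (-1/k) log Σ_{C_k} μ(C_k)²`. -/
def H2up (N : ℕ) (μ : Measure (ℕ → Fin N)) : ℝ :=
  limsup (fun k : ℕ =>
    Real.log (∑ w : Fin k → Fin N, (μ (cyl k w)).toReal ^ 2) / (-(k : ℝ))) atTop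

/-- `h₀ = liminf_k (-1/k) log ∫_Ω max_{C_k} μ_ω(C_k) dℙ`. -/
def h0lim {Ω : Type*} [MeasurableSpace Ω] (N : ℕ) (P : Measure Ω)
    (κ : Kernel Ω (ℕ → Fin N)) : ℝ :=
  liminf (fun k : ℕ =>
    Real.log (∫ ω, (⨆ w : Fin k → Fin N, ((κ ω) (cyl k w)).toReal) ∂P) / (-(k : ℝ))) atTop

/-- The marginal measure `μ = ∫_Ω μ_ω dℙ`, evaluated (as a real number) on a set. -/
def muBar {Ω X : Type*} [MeasurableSpace Ω] [MeasurableSpace X]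
    (P : Measure Ω) (κ : Kernel Ω X) (B : Set X) : ℝ :=
  ∫ ω, ((κ ω) B).toReal ∂P
/-! Integrating hypothesis (II) over `Ω` bounds the distance between `μ(A ∩ σ^{-g-n}A)` and
`∫ μ_ω(A) μ_{θ^{n+g}ω}(A) dℙ` by `α(g)`. Since `θ^{n+g}` preserves `ℙ`, the functions
`ω ↦ μ_ω(A)` and `ω ↦ μ_{θ^{n+g}ω}(A)` both have mean `μ(A)`, so the latter integral minus
`μ(A)²` is their covariance. -/

theorem measurable_shiftN {A : Type*} [MeasurableSpace A] : Measurable (shiftN (A := A)) :=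
  measurable_pi_lambda _ fun n => measurable_pi_apply (n + 1)

theorem cylAlg.measurableSet {A : Type*} [MeasurableSpace A] [Countable A]
    [MeasurableSingletonClass A] {n : ℕ} {B : Set (ℕ → A)} (hB : cylAlg n B) :
    MeasurableSet B := by
  obtain ⟨s, rfl⟩ := hB
  exact (measurable_pi_lambda _ fun i : Fin n => measurable_pi_apply (i : ℕ))
    s.to_countable.measurableSet

theorem ProbabilityTheory.Kernel.memLp_toReal_apply {α β : Type*} [MeasurableSpace α]
    [MeasurableSpace β] {κ : Kernel α β} [IsFiniteKernel κ] {P : Measure α} [IsFiniteMeasure P]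
    {s : Set β} (hs : MeasurableSet s) (p : ENNReal) :
    MemLp (fun a => (κ a s).toReal) p P :=
  memLp_of_bounded (a := 0) (b := κ.bound.toReal)
    (ae_of_all _ fun a => ⟨ENNReal.toReal_nonneg,
      ENNReal.toReal_mono κ.bound_ne_top (κ.measure_le_bound a s)⟩)
    (κ.measurable_coe hs).ennreal_toReal.aestronglyMeasurable p

theorem MeasureTheory.abs_integral_sub_integral_le {α : Type*} [MeasurableSpace α]
    {μ : Measure α} [IsProbabilityMeasure μ] {f h : α → ℝ} (hf : Integrable f μ)
    (hh : Integrable h μ) {C : ℝ} (hC : ∀ᵐ x ∂μ, |f x - h x| ≤ C) :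
    |∫ x, f x ∂μ - ∫ x, h x ∂μ| ≤ C := by
  rw [← integral_sub hf hh]
  simpa using norm_integral_le_of_norm_le_const (f := fun x => f x - h x) hC

theorem MeasureTheory.MeasurePreserving.integral_comp_of_aestronglyMeasurable
    {α β G : Type*} [MeasurableSpace α] [MeasurableSpace β] [NormedAddCommGroup G]
    [NormedSpace ℝ G] {μ : Measure α} {ν : Measure β} {T : α → β}
    (hT : MeasurePreserving T μ ν) {f : β → G} (hf : AEStronglyMeasurable f ν) :
    ∫ x, f (T x) ∂μ = ∫ y, f y ∂ν := by
  rw [← integral_map hT.measurable.aemeasurable (hT.map_eq ▸ hf), hT.map_eq]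

theorem MeasureTheory.MeasurePreserving.integral_sub_mul_comp_sub {Ω : Type*}
    [MeasurableSpace Ω] {P : Measure Ω} [IsProbabilityMeasure P] {T : Ω → Ω}
    (hT : MeasurePreserving T P P) {a : Ω → ℝ} (ha : MemLp a 2 P) :
    ∫ ω, (a ω - P[a]) * (a (T ω) - P[a]) ∂P = ∫ ω, a ω * a (T ω) ∂P - P[a] ^ 2 := by
  have hmean : P[a ∘ T] = P[a] := hT.integral_comp_of_aestronglyMeasurable ha.1
  have hcov := covariance_eq_sub ha (ha.comp_measurePreserving hT)
  rw [covariance, hmean] at hcov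
  rw [sq]
  exact hcov

theorem selfcorrelation_bound_general
    {Ω : Type*} [MeasurableSpace Ω] {N : ℕ}
    (P : Measure Ω) [IsProbabilityMeasure P]
    (θ : Ω ≃ᵐ Ω) (hθ : Ergodic θ P)
    (κ : Kernel Ω (ℕ → Fin N)) [IsMarkovKernel κ]
    (αf : ℕ → ℝ)
    (hII : ∀ n m g : ℕ, 1 ≤ n → 1 ≤ m → 1 ≤ g →
      ∀ As Bs : Set (ℕ → Fin N), cylAlg n As → cylAlg m Bs →
        ∀ᵐ ω ∂P, |((κ ω) (As ∩ shiftN^[g + n] ⁻¹' Bs)).toReal -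
          ((κ ω) As).toReal * ((κ ((⇑θ)^[n + g] ω)) Bs).toReal| ≤ αf g)
    (n g : ℕ) (hn : 1 ≤ n) (hg : 1 ≤ g)
    (As : Set (ℕ → Fin N)) (hAs : cylAlg n As) :
    |muBar P κ (As ∩ shiftN^[g + n] ⁻¹' As) - (muBar P κ As) ^ 2| ≤
      αf g + |∫ ω, (((κ ω) As).toReal - muBar P κ As) *
        (((κ ((⇑θ)^[n + g] ω)) As).toReal - muBar P κ As) ∂P| := by
  have hA : MeasurableSet As := hAs.measurableSet
  have hT : MeasurePreserving (⇑θ)^[n + g] P P := hθ.toMeasurePreserving.iterate _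
  have ha : MemLp (fun ω => ((κ ω) As).toReal) 2 P := κ.memLp_toReal_apply hA 2
  have hf : Integrable (fun ω => ((κ ω) (As ∩ shiftN^[g + n] ⁻¹' As)).toReal) P :=
    (κ.memLp_toReal_apply (hA.inter (measurable_shiftN.iterate _ hA)) 1).integrable le_rfl
  have hmix := abs_integral_sub_integral_le hf
    (ha.integrable_mul (ha.comp_measurePreserving hT)) (hII n n g hn hn hg As As hAs hAs)
  have hcov := hT.integral_sub_mul_comp_sub ha
  calc _ ≤ _ := abs_sub_le _ (∫ ω, (κ ω As).toReal * (κ ((⇑θ)^[n + g] ω) As).toReal ∂P) _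
    _ ≤ _ := add_le_add hmix (congrArg abs hcov).ge

/-- If the sample measures satisfy the fibered mixing hypothesis (II), then
for all `n, g ≥ 1` and every `A ∈ F₀ⁿ(X)`:
`|μ(A ∩ σ^{−g−n}A) − μ(A)²| ≤ α(g) + |∫_Ω (μ_ω(A) − μ(A))·(μ_{θ^{n+g}ω}(A) − μ(A)) dℙ(ω)|`. -/
theorem selfcorrelation_bound
    {Ω : Type*} [MeasurableSpace Ω] {N : ℕ}
    (P : Measure Ω) [IsProbabilityMeasure P]
    (θ : Ω ≃ᵐ Ω) (hθ : Ergodic θ P)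
    (κ : Kernel Ω (ℕ → Fin N)) [IsMarkovKernel κ]
    (hequiv : ∀ᵐ ω ∂P, ∀ i : ℕ, (κ ω).map (shiftN^[i]) = κ ((⇑θ)^[i] ω))
    (αf : ℕ → ℝ)
    (hII : ∀ n m g : ℕ, 1 ≤ n → 1 ≤ m → 1 ≤ g →
      ∀ As Bs : Set (ℕ → Fin N), cylAlg n As → cylAlg m Bs →
        ∀ᵐ ω ∂P, |((κ ω) (As ∩ shiftN^[g + n] ⁻¹' Bs)).toReal -
          ((κ ω) As).toReal * ((κ ((⇑θ)^[n + g] ω)) Bs).toReal| ≤ αf g)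
    (n g : ℕ) (hn : 1 ≤ n) (hg : 1 ≤ g)
    (As : Set (ℕ → Fin N)) (hAs : cylAlg n As) :
    |muBar P κ (As ∩ shiftN^[g + n] ⁻¹' As) - (muBar P κ As) ^ 2| ≤
      αf g + |∫ ω, (((κ ω) As).toReal - muBar P κ As) *
        (((κ ((⇑θ)^[n + g] ω)) As).toReal - muBar P κ As) ∂P| :=
  selfcorrelation_bound_general P θ hθ κ αf hII n g hn hg As hAs
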